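/- Let A be an n-by-n complex matrix and let m be a positive integer. Suppose that for each positive integer k there exists a real number a_k with \|A^k\|_1 \le a_k. Let p be a positive integer with 1 \le p \le m+1, let p_0 be a multiple of p satisfying m+1 \le p_0 \le m+1+p, and define \alpha_p = max{ a_k^{1/k} : k = p, m+1, m+2, \ldots, p_0 - 1, p_0 + 1, p_0 + 2, \ldots, m+1+p }. If 0 < \alpha_p < m+3, then the series remainder R'_m(A) = \sum_{k=m+1}^{\infty} A^k/(k+1)! satisfies the strict bound \|R'_m(A)\|_1 < (\alpha_p^{m+1}/(m+2)!) \cdot 1/(1 - \alpha_p/(m+3)). -/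

import Mathlib

/-!
Transposition turns the matrix 1-norm into the `∞`-operator norm, which is submultiplicative.
Every `k ≥ m + 1` is either a multiple of `p` or a multiple of `p` plus an exponent `r` in the
window `m + 1, …, m + p` with `p ∤ r`; since `p ∣ p₀`, both `p` and such an `r` are among the
exponents defining `α`, so `‖A ^ k‖₁ ≤ α ^ k`. The remainder is then dominated termwise by the
geometric series `α ^ (m + 1) / (m + 2)! * (α / (m + 3)) ^ j`, strictly at `j = 2` because `α > 0`.
-/

/-- The matrix 1-norm of a complex square matrix: the operator norm induced by the vector
1-norm, i.e. the maximum absolute column sum `max_j ∑_i ‖A i j‖`. -/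
noncomputable def matrixOneNorm {n : ℕ} (A : Matrix (Fin n) (Fin n) ℂ) : ℝ :=
  ⨆ j, ∑ i, ‖A i j‖

open Nat Matrix
open scoped Matrix.Norms.Operator

theorem matrixOneNorm_eq_norm_transpose {n : ℕ} (A : Matrix (Fin n) (Fin n) ℂ) :
    matrixOneNorm A = ‖Aᵀ‖ := by
  rw [matrixOneNorm, Matrix.linfty_opNorm_def, Finset.sup_univ_eq_ciSup, NNReal.coe_iSup]
  simp [NNReal.coe_sum]

section PowerBounds

variable {R : Type*} [SeminormedRing R] {x : R} {α : ℝ}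

theorem norm_pow_add_le_of_le {i j : ℕ} (hi : ‖x ^ i‖ ≤ α ^ i) (hj : ‖x ^ j‖ ≤ α ^ j) :
    ‖x ^ (i + j)‖ ≤ α ^ (i + j) := by
  rw [pow_add, pow_add]
  exact (norm_mul_le _ _).trans (mul_le_mul hi hj (norm_nonneg _) ((norm_nonneg _).trans hi))

theorem norm_pow_mul_le_of_le {p t : ℕ} (hp : ‖x ^ p‖ ≤ α ^ p) (ht : 0 < t) :
    ‖x ^ (p * t)‖ ≤ α ^ (p * t) := by
  induction t, ht using Nat.le_induction with
  | base => simpa using hp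
  | succ t _ ih => rw [Nat.mul_succ]; exact norm_pow_add_le_of_le ih hp

theorem norm_pow_le_of_le_on_Ico {p m k : ℕ} (hp : 0 < p) (hm : 0 < m)
    (hxp : ‖x ^ p‖ ≤ α ^ p) (hIco : ∀ r ∈ Set.Ico m (m + p), ¬ p ∣ r → ‖x ^ r‖ ≤ α ^ r)
    (hk : m ≤ k) : ‖x ^ k‖ ≤ α ^ k := by
  induction k using Nat.strong_induction_on with
  | _ k ih =>
  by_cases hkp : k < m + p
  · by_cases hdvd : p ∣ k
    · obtain ⟨t, rfl⟩ := hdvd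
      exact norm_pow_mul_le_of_le hxp (Nat.pos_of_mul_pos_left (hm.trans_le hk))
    · exact hIco k ⟨hk, hkp⟩ hdvd
  · obtain ⟨j, rfl⟩ : ∃ j, k = j + p := ⟨k - p, by omega⟩
    exact norm_pow_add_le_of_le (ih j (by omega) (by omega)) hxp

end PowerBounds

theorem norm_tsum_inv_factorial_succ_smul_pow_le {𝕜 E : Type*} [RCLike 𝕜] [SeminormedRing E]
    [NormedSpace 𝕜 E] {x : E} {α : ℝ} {N : ℕ} (hx : ∀ k, N ≤ k → ‖x ^ k‖ ≤ α ^ k) :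
    ‖∑' k : {k : ℕ // N ≤ k}, ((k + 1 : ℕ)! : 𝕜)⁻¹ • x ^ (k : ℕ)‖ ≤
      ∑' k : {k : ℕ // N ≤ k}, α ^ (k : ℕ) / (k + 1 : ℕ)! := by
  have hsum : Summable fun k : ℕ => α ^ k / (k + 1)! :=
    (Real.summable_pow_div_factorial |α|).of_norm_bounded fun k => by
      rw [Real.norm_eq_abs, abs_div, abs_pow, Nat.abs_cast]
      gcongr
      exact k.le_succ
  refine tsum_of_norm_bounded (hsum.subtype _).hasSum fun k => ?_
  rw [norm_smul, norm_inv, RCLike.norm_natCast, inv_mul_eq_div]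
  exact div_le_div_of_nonneg_right (hx k k.2) (Nat.cast_nonneg _)

theorem tsum_subtype_le_eq_tsum_add {M : Type*} [AddCommMonoid M] [TopologicalSpace M] (N : ℕ)
    (f : ℕ → M) : ∑' k : {k : ℕ // N ≤ k}, f k = ∑' j, f (N + j) := by
  let e : ℕ ≃ {k : ℕ // N ≤ k} :=
    { toFun j := ⟨N + j, N.le_add_right j⟩
      invFun k := k - N
      left_inv j := by simp
      right_inv k := Subtype.ext (Nat.add_sub_cancel' k.2) }
  exact (e.tsum_eq (f ∘ Subtype.val)).symm

theorem pow_add_div_factorial_le_geometric {α : ℝ} (hα : 0 ≤ α) (N j : ℕ) :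
    α ^ (N + j) / (N + j + 1)! ≤ α ^ N / (N + 1)! * (α / (N + 2)) ^ j := by
  have hfact : ((N + 1)! : ℝ) * (N + 2) ^ j ≤ (N + j + 1)! := by
    rw [show N + j + 1 = N + 1 + j by omega]
    exact_mod_cast Nat.factorial_mul_pow_le_factorial
  calc α ^ (N + j) / (N + j + 1)! ≤ α ^ (N + j) / ((N + 1)! * (N + 2) ^ j) := by
        gcongr
    _ = α ^ N / (N + 1)! * (α / (N + 2)) ^ j := by
        rw [div_pow, pow_add]
        field_simp

theorem pow_add_two_div_factorial_lt_geometric {α : ℝ} (hα : 0 < α) (N : ℕ) :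
    α ^ (N + 2) / (N + 2 + 1)! < α ^ N / (N + 1)! * (α / (N + 2)) ^ 2 := by
  have hfact : (N + 1)! * (N + 2) ^ 2 < (N + 2 + 1)! := by
    rw [show (N + 2 + 1)! = (N + 3) * ((N + 2) * (N + 1)!) from rfl]
    nlinarith [factorial_pos (N + 1)]
  calc α ^ (N + 2) / (N + 2 + 1)! < α ^ (N + 2) / ((N + 1)! * (N + 2) ^ 2) := by
        gcongr
        exact_mod_cast hfact
    _ = α ^ N / (N + 1)! * (α / (N + 2)) ^ 2 := by
        rw [div_pow, pow_add]
        field_simp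

theorem tsum_pow_div_factorial_succ_lt {α : ℝ} {N : ℕ} (hα0 : 0 < α) (hαN : α < N + 2) :
    ∑' k : {k : ℕ // N ≤ k}, α ^ (k : ℕ) / (k + 1 : ℕ)! <
      α ^ N / (N + 1)! * (1 / (1 - α / (N + 2))) := by
  have hx0 : 0 ≤ α / (N + 2) := by positivity
  have hx1 : α / (N + 2) < 1 := (div_lt_one (by positivity)).2 hαN
  have hgeom := (hasSum_geometric_of_lt_one hx0 hx1).mul_left (α ^ N / (N + 1)!)
  rw [tsum_subtype_le_eq_tsum_add N fun k => α ^ k / (k + 1 : ℕ)!, one_div, ← hgeom.tsum_eq]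
  exact Summable.tsum_lt_tsum_of_nonneg (fun j => by positivity)
    (pow_add_div_factorial_le_geometric hα0.le N) (pow_add_two_div_factorial_lt_geometric hα0 N)
    hgeom.summable

theorem le_pow_of_rpow_inv_natCast_le {a α : ℝ} {k : ℕ} (ha : 0 ≤ a) (hk : k ≠ 0)
    (h : a ^ (k⁻¹ : ℝ) ≤ α) : a ≤ α ^ k := by
  rw [← Real.rpow_inv_natCast_pow ha hk]
  gcongr

theorem matrix_series_remainder_oneNorm_lt_general {n : ℕ} (A : Matrix (Fin n) (Fin n) ℂ)
    (m : ℕ) (a : ℕ → ℝ) (ha : ∀ k : ℕ, 0 < k → matrixOneNorm (A ^ k) ≤ a k)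
    (p : ℕ) (hp1 : 1 ≤ p)
    (p₀ : ℕ) (hp₀mul : p ∣ p₀)
    (α : ℝ)
    (hα : α = (insert p ((Finset.Icc (m + 1) (m + 1 + p)).erase p₀)).sup'
        ⟨p, Finset.mem_insert_self p _⟩ (fun k => a k ^ ((k : ℝ)⁻¹)))
    (hα0 : 0 < α) (hαlt : α < m + 3) :
    matrixOneNorm
        (∑' k : {k : ℕ // m + 1 ≤ k}, (Nat.factorial ((k : ℕ) + 1) : ℂ)⁻¹ • A ^ (k : ℕ)) <
      α ^ (m + 1) / (Nat.factorial (m + 2) : ℝ) * (1 / (1 - α / (m + 3))) := by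
  have hS : ∀ k ∈ insert p ((Finset.Icc (m + 1) (m + 1 + p)).erase p₀), 0 < k →
      ‖Aᵀ ^ k‖ ≤ α ^ k := by
    intro k hk hk0
    have hAk := ha k hk0
    rw [matrixOneNorm_eq_norm_transpose, transpose_pow] at hAk
    exact hAk.trans <| le_pow_of_rpow_inv_natCast_le ((norm_nonneg _).trans hAk) hk0.ne' <|
      hα ▸ Finset.le_sup' (fun k => a k ^ ((k : ℝ)⁻¹)) hk
  have hpow : ∀ k, m + 1 ≤ k → ‖Aᵀ ^ k‖ ≤ α ^ k := fun k hk =>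
    norm_pow_le_of_le_on_Ico hp1 m.succ_pos (hS p (Finset.mem_insert_self _ _) hp1)
      (fun r hr hpr => hS r
        (Finset.mem_insert_of_mem <| Finset.mem_erase.2
          ⟨fun hr₀ => hpr (hr₀ ▸ hp₀mul), Finset.mem_Icc.2 ⟨hr.1, hr.2.le⟩⟩)
        (m.succ_pos.trans_le hr.1)) hk
  have hN : ((m + 1 : ℕ) : ℝ) + 2 = m + 3 := by push_cast; ring
  calc matrixOneNorm (∑' k : {k : ℕ // m + 1 ≤ k}, ((k + 1 : ℕ)! : ℂ)⁻¹ • A ^ (k : ℕ))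
      = ‖∑' k : {k : ℕ // m + 1 ≤ k}, ((k + 1 : ℕ)! : ℂ)⁻¹ • Aᵀ ^ (k : ℕ)‖ := by
        simp only [matrixOneNorm_eq_norm_transpose, transpose_tsum, transpose_smul,
          transpose_pow]
    _ ≤ ∑' k : {k : ℕ // m + 1 ≤ k}, α ^ (k : ℕ) / (k + 1 : ℕ)! :=
        norm_tsum_inv_factorial_succ_smul_pow_le hpow
    _ < α ^ (m + 1) / (m + 2)! * (1 / (1 - α / (m + 3))) := by
        have h := tsum_pow_div_factorial_succ_lt (N := m + 1) hα0 (hN ▸ hαlt)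
        rw [hN] at h
        exact h

/-- Theorem 3 of the paper.  Let `A` be an `n×n` complex matrix and `m ≥ 1`.
Suppose `‖A^k‖₁ ≤ a k` for every `k ≥ 1`.  Let `1 ≤ p ≤ m+1`, let `p₀` be a multiple of `p`
with `m+1 ≤ p₀ ≤ m+1+p`, and let
`α_p = max { (a k)^{1/k} : k = p, m+1, m+2, …, p₀-1, p₀+1, …, m+1+p }`.
If `0 < α_p < m+3`, then the remainder `R'_m(A) = ∑_{k=m+1}^∞ A^k/(k+1)!` satisfies
`‖R'_m(A)‖₁ < (α_p^{m+1}/(m+2)!) · 1/(1 - α_p/(m+3))`. -/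
theorem matrix_series_remainder_oneNorm_lt {n : ℕ} (A : Matrix (Fin n) (Fin n) ℂ)
    (m : ℕ) (hm : 0 < m) (a : ℕ → ℝ) (ha : ∀ k : ℕ, 0 < k → matrixOneNorm (A ^ k) ≤ a k)
    (p : ℕ) (hp1 : 1 ≤ p) (hpm : p ≤ m + 1)
    (p₀ : ℕ) (hp₀mul : p ∣ p₀) (hp₀l : m + 1 ≤ p₀) (hp₀u : p₀ ≤ m + 1 + p)
    (α : ℝ)
    (hα : α = (insert p ((Finset.Icc (m + 1) (m + 1 + p)).erase p₀)).sup'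
        ⟨p, Finset.mem_insert_self p _⟩ (fun k => a k ^ ((k : ℝ)⁻¹)))
    (hα0 : 0 < α) (hαlt : α < m + 3) :
    matrixOneNorm
        (∑' k : {k : ℕ // m + 1 ≤ k}, (Nat.factorial ((k : ℕ) + 1) : ℂ)⁻¹ • A ^ (k : ℕ)) <
      α ^ (m + 1) / (Nat.factorial (m + 2) : ℝ) * (1 / (1 - α / (m + 3))) :=
  matrix_series_remainder_oneNorm_lt_general A m a ha p hp1 p₀ hp₀mul α hα hα0 hαlt
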